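/- arXiv:1202.6221 — 4 statements merged into one kernel-verified Lean document; each statement's English description precedes it below -/
import Mathlib

section
/- (Step 2 of Lemma 1.) Fix a class q ∈ {1,…,Q} and an index i with y_i = q, and assume m_q ≥ 1. Let z ∈ 𝒵^m be a sample with label sequence y, z^{\i} the sample with the i-th example removed, and z^i the sample with (x_i, q) replaced by (x_i', q). Assume all loss functions ℓ_j take values in [0, M] and that the algorithm A satisfies sup_{x∈𝒳} ‖L(A_z, x, q) − L(A_{z^{\i}}, x, q)‖ ≤ B/m_q and sup_{x∈𝒳} ‖L(A_{z^i}, x, q) − L(A_{z^{\i}}, x, q)‖ ≤ B/m_q. Then the empirical class-q loss matrices L̂_q = (1/m_q) Σ_{k: y_k=q} L(A_z, x_k, q) and L̂_q^i = (1/m_q) Σ_{k: y_k=q, k≠i} L(A_{z^i}, x_k, q) + (1/m_q) L(A_{z^i}, x_i', q) satisfy ‖L̂_q − L̂_q^i‖ ≤ 2B/m_q + √Q·M/m_q. -/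
open Matrix MeasureTheory ENNReal

/-- The operator norm (largest singular value) of a real square matrix,
with respect to the Euclidean norm. -/
noncomputable def opNorm {n : Type*} [Fintype n] [DecidableEq n] (M : Matrix n n ℝ) : ℝ :=
  ‖Matrix.toEuclideanCLM (𝕜 := ℝ) M‖

/-- The loss matrix `L(h, x, y)` with entries `l_{ij} = ℓ_j(h, x, y)` if `i = y` and
`i ≠ j`, and `0` otherwise. -/
noncomputable def lossMatrix {𝒳 ℋ : Type*} {Q : ℕ} (ℓ : Fin Q → ℋ → 𝒳 → Fin Q → ℝ)
    (h : ℋ) (x : 𝒳) (y : Fin Q) : Matrix (Fin Q) (Fin Q) ℝ :=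
  Matrix.of fun i j => if i = y ∧ i ≠ j then ℓ j h x y else 0

/-!
The `i`-th summands of the two empirical matrices are losses of different hypotheses at
different points; both matrices have a single nonzero row with entries in `[0, M]`, so their
difference costs at most `√Q · M`. Every other summand compares `A_z` with `A_{z^i}` at the same
point, which costs at most `2B/m_q` by going through `A_{z^{\i}}`. There are at most `m_q` such
summands, and the whole sum is divided by `m_q`.
-/

open scoped Matrix.Norms.L2Operator

lemma opNorm_eq_norm {n : Type*} [Fintype n] [DecidableEq n] (A : Matrix n n ℝ) :
    opNorm A = ‖A‖ :=
  rfl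

theorem EuclideanSpace.norm_le_sqrt_card_mul_norm_ofLp {n : Type*} [Fintype n]
    (v : EuclideanSpace ℝ n) : ‖v‖ ≤ √(Fintype.card n) * ‖WithLp.ofLp v‖ := by
  rw [EuclideanSpace.norm_eq, ← Real.sqrt_sq (norm_nonneg (WithLp.ofLp v)),
    ← Real.sqrt_mul (Nat.cast_nonneg _)]
  gcongr
  calc ∑ j, ‖v j‖ ^ 2 ≤ ∑ _j : n, ‖WithLp.ofLp v‖ ^ 2 := by
        gcongr with j
        exact norm_le_pi_norm (WithLp.ofLp v) j
    _ = Fintype.card n * ‖WithLp.ofLp v‖ ^ 2 := by simp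

theorem Matrix.l2_opNorm_le_of_forall_ne_row_eq_zero {m n : Type*} [Fintype m] [Fintype n]
    [DecidableEq n] (A : Matrix m n ℝ) (q : m) (hA : ∀ i ≠ q, A i = 0) :
    ‖A‖ ≤ ‖WithLp.toLp 2 (A q)‖ := by
  classical
  rw [l2_opNorm_def]
  refine ContinuousLinearMap.opNorm_le_bound _ (norm_nonneg _) fun v => ?_
  have hAv : (toEuclideanLin.trans LinearMap.toContinuousLinearMap) A v
      = PiLp.single 2 q (inner ℝ (WithLp.toLp 2 (A q)) v) := by
    ext i
    by_cases hi : i = q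
    · subst hi
      simp [toLpLin_apply, mulVec, dotProduct, PiLp.inner_apply, mul_comm]
    · simp [toLpLin_apply, mulVec, hA i hi, hi]
  rw [hAv, PiLp.norm_single, Real.norm_eq_abs]
  exact abs_real_inner_le_norm _ _

theorem Matrix.l2_opNorm_le_sqrt_card_mul_of_forall_ne_row_eq_zero {m n : Type*} [Fintype m]
    [Fintype n] [DecidableEq n] (A : Matrix m n ℝ) (q : m) (hA : ∀ i ≠ q, A i = 0) {M : ℝ}
    (hM : 0 ≤ M) (hAq : ∀ j, |A q j| ≤ M) : ‖A‖ ≤ √(Fintype.card n) * M :=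
  calc ‖A‖ ≤ ‖WithLp.toLp 2 (A q)‖ := A.l2_opNorm_le_of_forall_ne_row_eq_zero q hA
    _ ≤ √(Fintype.card n) * ‖A q‖ := EuclideanSpace.norm_le_sqrt_card_mul_norm_ofLp _
    _ ≤ √(Fintype.card n) * M := by
        gcongr
        exact (pi_norm_le_iff_of_nonneg hM).2 hAq

section lossMatrix

variable {𝒳 ℋ : Type*} {Q : ℕ} (ℓ : Fin Q → ℋ → 𝒳 → Fin Q → ℝ)

lemma lossMatrix_apply_of_ne {h : ℋ} {x : 𝒳} {y i : Fin Q} (hi : i ≠ y) (j : Fin Q) :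
    lossMatrix ℓ h x y i j = 0 := by
  simp [lossMatrix, hi]

lemma abs_lossMatrix_sub_lossMatrix_apply_le {M : ℝ}
    (hloss : ∀ j h x y, ℓ j h x y ∈ Set.Icc (0 : ℝ) M) (h h' : ℋ) (x x' : 𝒳) (y j : Fin Q) :
    |(lossMatrix ℓ h x y - lossMatrix ℓ h' x' y) y j| ≤ M := by
  by_cases hyj : y = j
  · simpa [lossMatrix, hyj] using (hloss j h x y).1.trans (hloss j h x y).2
  · have h₁ := hloss j h x y
    have h₂ := hloss j h' x' y
    simp only [lossMatrix, Matrix.sub_apply, of_apply, ne_eq, hyj, not_false_iff, and_self, if_true]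
    rw [abs_sub_le_iff]
    constructor <;> linarith [h₁.1, h₁.2, h₂.1, h₂.2]

lemma norm_lossMatrix_sub_lossMatrix_le {M : ℝ} (hM : 0 ≤ M)
    (hloss : ∀ j h x y, ℓ j h x y ∈ Set.Icc (0 : ℝ) M) (h h' : ℋ) (x x' : 𝒳) (y : Fin Q) :
    ‖lossMatrix ℓ h x y - lossMatrix ℓ h' x' y‖ ≤ √Q * M := by
  simpa using l2_opNorm_le_sqrt_card_mul_of_forall_ne_row_eq_zero _ y
    (fun i hi => funext fun j => by
      simp [Matrix.sub_apply, lossMatrix_apply_of_ne ℓ hi])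
    hM (abs_lossMatrix_sub_lossMatrix_apply_le ℓ hloss h h' x x' y)

end lossMatrix

open Finset in
theorem norm_sum_sub_sum_erase_add_le {ι E : Type*} [DecidableEq ι] [SeminormedAddCommGroup E]
    {s : Finset ι} {i : ι} (hi : i ∈ s) {f g : ι → E} {u : E} {c d : ℝ}
    (hfg : ∀ k ∈ s.erase i, ‖f k - g k‖ ≤ c) (hu : ‖f i - u‖ ≤ d) :
    ‖∑ k ∈ s, f k - (∑ k ∈ s.erase i, g k + u)‖ ≤ #(s.erase i) * c + d := by
  rw [← add_sum_erase s f hi,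
    show f i + ∑ k ∈ s.erase i, f k - (∑ k ∈ s.erase i, g k + u)
      = ∑ k ∈ s.erase i, (f k - g k) + (f i - u) by rw [sum_sub_distrib]; abel]
  calc _ ≤ ‖∑ k ∈ s.erase i, (f k - g k)‖ + ‖f i - u‖ := norm_add_le _ _
    _ ≤ ∑ k ∈ s.erase i, ‖f k - g k‖ + ‖f i - u‖ := by gcongr; exact norm_sum_le _ _
    _ ≤ #(s.erase i) * c + d := by
        gcongr
        simpa using sum_le_sum hfg

theorem statement6_general {𝒳 ℋ : Type*} {Q m : ℕ}
    (ℓ : Fin Q → ℋ → 𝒳 → Fin Q → ℝ)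
    (A : List (𝒳 × Fin Q) → ℋ)
    (y : Fin m → Fin Q) (x : Fin m → 𝒳) (x' : 𝒳)
    (q : Fin Q) (i : Fin m) (hyi : y i = q)
    (B : ℝ) (hB : 0 < B) (M : ℝ) (hM : 0 ≤ M)
    (hloss : ∀ (j : Fin Q) (h : ℋ) (x0 : 𝒳) (y0 : Fin Q), ℓ j h x0 y0 ∈ Set.Icc (0 : ℝ) M)
    (mq : ℕ) (hmq : mq = (Finset.univ.filter fun j => y j = q).card)
    (z zi zbs : List (𝒳 × Fin Q))
    (hstab : ∀ x0 : 𝒳,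
      opNorm (lossMatrix ℓ (A z) x0 q - lossMatrix ℓ (A zbs) x0 q) ≤ B / mq)
    (hstab' : ∀ x0 : 𝒳,
      opNorm (lossMatrix ℓ (A zi) x0 q - lossMatrix ℓ (A zbs) x0 q) ≤ B / mq) :
    opNorm ((mq : ℝ)⁻¹ • ∑ k ∈ Finset.univ.filter (fun k => y k = q),
          lossMatrix ℓ (A z) (x k) q -
        (mq : ℝ)⁻¹ • ((∑ k ∈ (Finset.univ.filter fun k => y k = q).erase i,
          lossMatrix ℓ (A zi) (x k) q) + lossMatrix ℓ (A zi) x' q))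
      ≤ 2 * B / mq + Real.sqrt Q * M / mq := by
  simp only [opNorm_eq_norm] at hstab hstab' ⊢
  set S := Finset.univ.filter fun k => y k = q
  have hiS : i ∈ S := by simp [S, hyi]
  have hmq_pos : (0 : ℝ) < mq := by
    rw [hmq]
    exact_mod_cast Finset.card_pos.2 ⟨i, hiS⟩
  have hstable : ∀ k ∈ S.erase i,
      ‖lossMatrix ℓ (A z) (x k) q - lossMatrix ℓ (A zi) (x k) q‖ ≤ 2 * B / mq := fun k _ =>
    calc _ ≤ _ := norm_sub_le_norm_sub_add_norm_sub _ (lossMatrix ℓ (A zbs) (x k) q) _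
      _ ≤ B / mq + B / mq := by
          rw [norm_sub_rev _ (lossMatrix ℓ (A zi) (x k) q)]
          exact add_le_add (hstab (x k)) (hstab' (x k))
      _ = 2 * B / mq := by ring
  have hsum := norm_sum_sub_sum_erase_add_le hiS hstable
    (norm_lossMatrix_sub_lossMatrix_le ℓ hM hloss (A z) (A zi) (x i) x' q)
  have hcard : ((S.erase i).card : ℝ) ≤ mq := by
    rw [hmq]
    exact_mod_cast Finset.card_erase_le
  rw [← smul_sub, norm_smul, Real.norm_of_nonneg (by positivity)]
  calc _ ≤ (mq : ℝ)⁻¹ * (mq * (2 * B / mq) + √Q * M) := by gcongr; exact hsum.trans (by gcongr)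
    _ = 2 * B / mq + √Q * M / mq := by field_simp

/-- **Step 2 of Lemma 1.** Under the stability hypotheses and with losses valued in
`[0, M]`, the empirical class-`q` loss matrices computed on `z` and on `z^i` (with the
`i`-th example replaced by `(x', q)`) differ by at most `2B/m_q + √Q·M/m_q` in
operator norm. -/
theorem statement6 {𝒳 ℋ : Type*} [MeasurableSpace 𝒳] {Q m : ℕ}
    (ℓ : Fin Q → ℋ → 𝒳 → Fin Q → ℝ)
    (A : List (𝒳 × Fin Q) → ℋ)
    (y : Fin m → Fin Q) (x : Fin m → 𝒳) (x' : 𝒳)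
    (q : Fin Q) (i : Fin m) (hyi : y i = q)
    (B : ℝ) (hB : 0 < B) (M : ℝ) (hM : 0 ≤ M)
    (hloss : ∀ (j : Fin Q) (h : ℋ) (x0 : 𝒳) (y0 : Fin Q), ℓ j h x0 y0 ∈ Set.Icc (0 : ℝ) M)
    (mq : ℕ) (hmq : mq = (Finset.univ.filter fun j => y j = q).card) (hmq1 : 1 ≤ mq)
    (z zi zbs : List (𝒳 × Fin Q))
    (hz : z = List.ofFn fun j => (x j, y j))
    (hzi : zi = z.set i (x', q))
    (hzbs : zbs = z.eraseIdx i)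
    (hstab : ∀ x0 : 𝒳,
      opNorm (lossMatrix ℓ (A z) x0 q - lossMatrix ℓ (A zbs) x0 q) ≤ B / mq)
    (hstab' : ∀ x0 : 𝒳,
      opNorm (lossMatrix ℓ (A zi) x0 q - lossMatrix ℓ (A zbs) x0 q) ≤ B / mq) :
    opNorm ((mq : ℝ)⁻¹ • ∑ k ∈ Finset.univ.filter (fun k => y k = q),
          lossMatrix ℓ (A z) (x k) q -
        (mq : ℝ)⁻¹ • ((∑ k ∈ (Finset.univ.filter fun k => y k = q).erase i,
          lossMatrix ℓ (A zi) (x k) q) + lossMatrix ℓ (A zi) x' q))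
      ≤ 2 * B / mq + Real.sqrt Q * M / mq :=
  statement6_general ℓ A y x x' q i hyi B hB M hM hloss mq hmq z zi zbs hstab hstab'
end

section
/- (Lemma 1.) Under the hypotheses of Steps 1 and 2 (stability with constant B, losses valued in [0,M], y_i = q), define H_q(z) := 𝔇(𝓛_q(z)) − 𝔇(L̂_q(z)) ∈ ℝ^{2Q×2Q}, where 𝓛_q(z) = 𝔼_{X∼D_{X|q}} L(A_z, X, q), L̂_q(z) = (1/m_q) Σ_{k: y_k=q} L(A_z, x_k, q), and 𝔇 denotes the self-adjoint dilation. Then for every i with y_i = q, (H_q(z) − H_q(z^i))² ≼ (4B/m_q + √Q·M/m_q)² · I, where I is the 2Q×2Q identity matrix and ≼ is the Loewner order. -/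
open Matrix MeasureTheory ENNReal

/-- The self-adjoint dilation `𝔇(A) = [[0, A], [Aᵀ, 0]]` of a square real matrix. -/
noncomputable def dilation {Q : ℕ} (A : Matrix (Fin Q) (Fin Q) ℝ) :
    Matrix (Fin Q ⊕ Fin Q) (Fin Q ⊕ Fin Q) ℝ :=
  Matrix.fromBlocks 0 A Aᵀ 0

/-- The Loewner (positive semidefinite) order: `S ≼ T` iff `T - S` is PSD. -/
def loewnerLE {n : Type*} [Fintype n] (S T : Matrix n n ℝ) : Prop :=
  (T - S).PosSemidef

/-!
`H_q(z) − H_q(z^i)` is the dilation `𝔇(Δ)` of a `Q × Q` matrix, and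
`𝔇(Δ)² = diag(Δ Δᵀ, Δᵀ Δ) ≼ ‖Δ‖² I`, so it suffices to bound the operator norm of `Δ`.
Comparing both `A_z` and `A_{z^i}` with the leave-one-out hypothesis `A_{z^{\i}}` gives
`‖L(A_z, t, q) − L(A_{z^i}, t, q)‖ ≤ 2B/m_q` for every `t`. This bounds the population part
of `Δ` and all but one term of its empirical part; the remaining term
`L(A_z, x_i, q) − L(A_{z^i}, x', q)` is supported on row `q` with entries in `[−M, M]`, so its
norm is at most `√Q M`.
-/

open scoped Matrix.Norms.L2Operator

namespace Matrix

theorem posSemidef_sq_smul_one_sub_conjTranspose_mul_self {n : Type*} [Fintype n]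
    [DecidableEq n] {A : Matrix n n ℝ} {c : ℝ} (h : ‖A‖ ≤ c) :
    (c ^ 2 • (1 : Matrix n n ℝ) - Aᴴ * A).PosSemidef := by
  refine .of_dotProduct_mulVec_nonneg (by simp [IsHermitian]) fun x => ?_
  have hnorm (v : n → ℝ) : star v ⬝ᵥ v = ‖(WithLp.toLp 2 v : EuclideanSpace ℝ n)‖ ^ 2 := by
    rw [← real_inner_self_eq_norm_sq, EuclideanSpace.inner_toLp_toLp, dotProduct_comm]
  have hAx := (A.l2_opNorm_mulVec (WithLp.toLp 2 x)).trans
    (mul_le_mul_of_nonneg_right h (norm_nonneg _))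
  rw [sub_mulVec, smul_mulVec, one_mulVec, dotProduct_sub, dotProduct_smul, ← mulVec_mulVec,
    dotProduct_mulVec, vecMul_conjTranspose, star_star, hnorm, hnorm, smul_eq_mul, sub_nonneg,
    ← mul_pow]
  exact pow_le_pow_left₀ (norm_nonneg _) hAx 2

theorem PosSemidef.fromBlocks_zero {R m n : Type*} [CommRing R] [PartialOrder R] [StarRing R]
    [StarOrderedRing R] [Fintype m] [Fintype n] {X : Matrix m m R} {Y : Matrix n n R}
    (hX : X.PosSemidef) (hY : Y.PosSemidef) :
    (fromBlocks X 0 0 Y).PosSemidef := by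
  refine .of_dotProduct_mulVec_nonneg (hX.isHermitian.fromBlocks (by simp) hY.isHermitian)
    fun x => ?_
  rw [← Sum.elim_comp_inl_inr x, fromBlocks_mulVec]
  simp only [dotProduct, Fintype.sum_sum_type, Sum.elim_inl, Sum.elim_inr]
  simpa [dotProduct] using add_nonneg (hX.dotProduct_mulVec_nonneg (x ∘ Sum.inl))
    (hY.dotProduct_mulVec_nonneg (x ∘ Sum.inr))

theorem norm_le_of_forall_ne_row_eq_zero {m n : Type*} [Fintype m] [Fintype n]
    [DecidableEq m] [DecidableEq n] {A : Matrix m n ℝ} {q : m} (hrow : ∀ a ≠ q, A a = 0)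
    {M : ℝ} (hM : 0 ≤ M) (hent : ∀ b, |A q b| ≤ M) :
    ‖A‖ ≤ Real.sqrt (Fintype.card n) * M := by
  have hdiag : A * Aᴴ = diagonal (Pi.single q (∑ b, A q b ^ 2)) := by
    ext a a'
    rcases eq_or_ne a q with rfl | ha
    · rcases eq_or_ne a' a with rfl | ha'
      · simp [mul_apply, sq]
      · simp [mul_apply, hrow a' ha', ha'.symm]
    · simp [mul_apply, hrow a ha, diagonal_apply, ha]
  have hsq : ‖A‖ ^ 2 = ∑ b, A q b ^ 2 := by
    rw [sq, ← l2_opNorm_conjTranspose, ← l2_opNorm_conjTranspose_mul_self,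
      conjTranspose_conjTranspose, hdiag, l2_opNorm_diagonal, Pi.norm_single,
      Real.norm_of_nonneg (by positivity)]
  rw [← Real.sqrt_sq hM, ← Real.sqrt_mul (by positivity),
    Real.le_sqrt (norm_nonneg _) (by positivity), hsq]
  calc ∑ b, A q b ^ 2 ≤ ∑ _b : n, M ^ 2 :=
        Finset.sum_le_sum fun b _ => sq_le_sq.2 (by rw [abs_of_nonneg hM]; exact hent b)
    _ = Fintype.card n * M ^ 2 := by simp

theorem norm_of_integral_le {α n : Type*} [MeasurableSpace α] [Fintype n] [DecidableEq n]
    {μ : Measure α} [IsProbabilityMeasure μ] {f : α → Matrix n n ℝ}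
    (hf : ∀ a b, Integrable (fun t => f t a b) μ) {c : ℝ} (hc : ∀ t, ‖f t‖ ≤ c) :
    ‖Matrix.of fun a b => ∫ t, f t a b ∂μ‖ ≤ c := by
  have hint : Integrable f μ := by
    rw [funext fun t => matrix_eq_sum_single (f t)]
    exact integrable_finsetSum _ fun a _ => integrable_finsetSum _ fun b _ => by
      simpa [smul_single] using (hf a b).smul_const (single a b (1 : ℝ))
  have hentry : (Matrix.of fun a b => ∫ t, f t a b ∂μ) = ∫ t, f t ∂μ := by
    ext a b
    exact (entryLinearMap ℝ ℝ a b).toContinuousLinearMap.integral_comp_comm hint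
  rw [hentry]
  simpa using norm_integral_le_of_norm_le_const (μ := μ) (Filter.Eventually.of_forall hc)

theorem norm_of_integral_sub_of_integral_le {α n : Type*} [MeasurableSpace α] [Fintype n]
    [DecidableEq n] {μ : Measure α} [IsProbabilityMeasure μ] {f g : α → Matrix n n ℝ}
    (hf : ∀ a b, Integrable (fun t => f t a b) μ) (hg : ∀ a b, Integrable (fun t => g t a b) μ)
    {c : ℝ} (hc : ∀ t, ‖f t - g t‖ ≤ c) :
    ‖(Matrix.of fun a b => ∫ t, f t a b ∂μ) - Matrix.of fun a b => ∫ t, g t a b ∂μ‖ ≤ c := by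
  have hsub : ((Matrix.of fun a b => ∫ t, f t a b ∂μ) - Matrix.of fun a b => ∫ t, g t a b ∂μ)
      = Matrix.of fun a b => ∫ t, (f t - g t) a b ∂μ := by
    ext a b
    exact (integral_sub (hf a b) (hg a b)).symm
  rw [hsub]
  exact norm_of_integral_le (fun a b => (hf a b).sub (hg a b)) hc

end Matrix

theorem dilation_sub {Q : ℕ} (A B : Matrix (Fin Q) (Fin Q) ℝ) :
    dilation (A - B) = dilation A - dilation B := by
  simp [dilation, sub_eq_add_neg, fromBlocks_add, fromBlocks_neg]

theorem dilation_sq {Q : ℕ} (A : Matrix (Fin Q) (Fin Q) ℝ) :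
    dilation A ^ 2 = fromBlocks (A * Aᵀ) 0 0 (Aᵀ * A) := by
  simp [dilation, sq, fromBlocks_multiply]

theorem loewnerLE_dilation_sq {Q : ℕ} {A : Matrix (Fin Q) (Fin Q) ℝ} {c : ℝ} (h : ‖A‖ ≤ c) :
    loewnerLE (dilation A ^ 2) (c ^ 2 • (1 : Matrix (Fin Q ⊕ Fin Q) (Fin Q ⊕ Fin Q) ℝ)) := by
  have hAt : ‖Aᴴ‖ ≤ c := by rwa [l2_opNorm_conjTranspose]
  have h₁ := posSemidef_sq_smul_one_sub_conjTranspose_mul_self hAt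
  have h₂ := posSemidef_sq_smul_one_sub_conjTranspose_mul_self h
  rw [conjTranspose_conjTranspose, conjTranspose_eq_transpose_of_trivial] at h₁
  rw [conjTranspose_eq_transpose_of_trivial] at h₂
  rw [loewnerLE, dilation_sq, ← fromBlocks_one, fromBlocks_smul]
  simpa [sub_eq_add_neg, fromBlocks_add, fromBlocks_neg] using h₁.fromBlocks_zero h₂

theorem norm_inv_smul_sum_sub_inv_smul_sum_erase_add_le {ι E : Type*} [DecidableEq ι]
    [SeminormedAddCommGroup E] [NormedSpace ℝ E] {F : Finset ι} {i : ι} (hi : i ∈ F)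
    {f g : ι → E} {u : E} {β γ : ℝ} (hβ : 0 ≤ β)
    (hfg : ∀ k ∈ F.erase i, ‖f k - g k‖ ≤ β) (hu : ‖f i - u‖ ≤ γ) :
    ‖(F.card : ℝ)⁻¹ • ∑ k ∈ F, f k - (F.card : ℝ)⁻¹ • (∑ k ∈ F.erase i, g k + u)‖
      ≤ β + γ / F.card := by
  have hF : (0 : ℝ) < F.card := by exact_mod_cast Finset.card_pos.2 ⟨i, hi⟩
  have hsplit : ∑ k ∈ F, f k - (∑ k ∈ F.erase i, g k + u)
      = ∑ k ∈ F.erase i, (f k - g k) + (f i - u) := by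
    rw [← Finset.add_sum_erase F f hi, Finset.sum_sub_distrib]
    abel
  have hcard : ((F.erase i).card : ℝ) ≤ F.card := by exact_mod_cast Finset.card_erase_le
  rw [← smul_sub, norm_smul, Real.norm_of_nonneg (inv_nonneg.2 hF.le), inv_mul_le_iff₀ hF,
    mul_add, mul_div_cancel₀ _ hF.ne', hsplit]
  calc ‖∑ k ∈ F.erase i, (f k - g k) + (f i - u)‖
      ≤ ‖∑ k ∈ F.erase i, (f k - g k)‖ + ‖f i - u‖ := norm_add_le _ _
    _ ≤ (F.erase i).card * β + γ := by
      gcongr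
      simpa using norm_sum_le_of_le _ hfg
    _ ≤ F.card * β + γ := by gcongr

theorem norm_lossMatrix_sub_le {𝒳 ℋ : Type*} {Q : ℕ} {ℓ : Fin Q → ℋ → 𝒳 → Fin Q → ℝ} {M : ℝ}
    (hM : 0 ≤ M) (hloss : ∀ j h x y, ℓ j h x y ∈ Set.Icc (0 : ℝ) M)
    (h h' : ℋ) (x x' : 𝒳) (q : Fin Q) :
    ‖lossMatrix ℓ h x q - lossMatrix ℓ h' x' q‖ ≤ Real.sqrt Q * M := by
  simpa using norm_le_of_forall_ne_row_eq_zero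
    (A := lossMatrix ℓ h x q - lossMatrix ℓ h' x' q) (q := q)
    (fun a ha => by ext b; simp [lossMatrix, ha]) hM fun b => by
      simp only [Matrix.sub_apply, lossMatrix, of_apply]
      split_ifs
      · exact abs_sub_le_of_nonneg_of_le (hloss _ _ _ _).1 (hloss _ _ _ _).2
          (hloss _ _ _ _).1 (hloss _ _ _ _).2
      · simpa using hM

theorem statement7_general {𝒳 ℋ : Type*} [MeasurableSpace 𝒳] {Q m : ℕ}
    (ℓ : Fin Q → ℋ → 𝒳 → Fin Q → ℝ)
    (A : List (𝒳 × Fin Q) → ℋ)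
    (D : Fin Q → Measure 𝒳) [∀ q, IsProbabilityMeasure (D q)]
    (y : Fin m → Fin Q) (x : Fin m → 𝒳) (x' : 𝒳)
    (q : Fin Q) (i : Fin m) (hyi : y i = q)
    (B : ℝ) (hB : 0 < B) (M : ℝ) (hM : 0 ≤ M)
    (hloss : ∀ (j : Fin Q) (h : ℋ) (x0 : 𝒳) (y0 : Fin Q), ℓ j h x0 y0 ∈ Set.Icc (0 : ℝ) M)
    (mq : ℕ) (hmq : mq = (Finset.univ.filter fun j => y j = q).card)
    (z zi zbs : List (𝒳 × Fin Q))
    (hstab : ∀ x0 : 𝒳,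
      opNorm (lossMatrix ℓ (A z) x0 q - lossMatrix ℓ (A zbs) x0 q) ≤ B / mq)
    (hstab' : ∀ x0 : 𝒳,
      opNorm (lossMatrix ℓ (A zi) x0 q - lossMatrix ℓ (A zbs) x0 q) ≤ B / mq)
    (hint : ∀ a b, Integrable (fun t => lossMatrix ℓ (A z) t q a b) (D q))
    (hint' : ∀ a b, Integrable (fun t => lossMatrix ℓ (A zi) t q a b) (D q))
    -- `H_q` evaluated at the sample `z` and at the perturbed sample `z^i`
    (Hz Hzi : Matrix (Fin Q ⊕ Fin Q) (Fin Q ⊕ Fin Q) ℝ)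
    (hHz : Hz = dilation (Matrix.of fun a b => ∫ t, lossMatrix ℓ (A z) t q a b ∂(D q)) -
        dilation ((mq : ℝ)⁻¹ • ∑ k ∈ Finset.univ.filter (fun k => y k = q),
          lossMatrix ℓ (A z) (x k) q))
    (hHzi : Hzi = dilation (Matrix.of fun a b => ∫ t, lossMatrix ℓ (A zi) t q a b ∂(D q)) -
        dilation ((mq : ℝ)⁻¹ • ((∑ k ∈ (Finset.univ.filter fun k => y k = q).erase i,
          lossMatrix ℓ (A zi) (x k) q) + lossMatrix ℓ (A zi) x' q))) :
    loewnerLE ((Hz - Hzi) ^ 2)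
      ((4 * B / mq + Real.sqrt Q * M / mq) ^ 2 • (1 : Matrix (Fin Q ⊕ Fin Q) (Fin Q ⊕ Fin Q) ℝ)) := by
  set F := Finset.univ.filter fun j => y j = q
  subst hmq
  -- `opNorm` is definitionally the L2 operator norm `‖·‖`, so `hstab` applies directly.
  have hstab₂ (t : 𝒳) : ‖lossMatrix ℓ (A z) t q - lossMatrix ℓ (A zi) t q‖ ≤ 2 * B / F.card :=
    calc _ ≤ ‖lossMatrix ℓ (A z) t q - lossMatrix ℓ (A zbs) t q‖
          + ‖lossMatrix ℓ (A zbs) t q - lossMatrix ℓ (A zi) t q‖ :=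
          norm_sub_le_norm_sub_add_norm_sub _ _ _
      _ ≤ B / F.card + B / F.card := add_le_add (hstab t) (by rw [norm_sub_rev]; exact hstab' t)
      _ = 2 * B / F.card := by ring
  have hpop := norm_of_integral_sub_of_integral_le hint hint' hstab₂
  have hemp := norm_inv_smul_sum_sub_inv_smul_sum_erase_add_le (F := F) (by simpa [F] using hyi)
    (by positivity) (fun k _ => hstab₂ (x k))
    (norm_lossMatrix_sub_le hM hloss (A z) (A zi) (x i) x' q)
  rw [hHz, hHzi, ← dilation_sub, ← dilation_sub, ← dilation_sub]
  refine loewnerLE_dilation_sq ?_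
  rw [sub_sub_sub_comm]
  refine (norm_sub_le _ _).trans ((add_le_add hpop hemp).trans_eq ?_)
  ring

/-- **Lemma 1.** With `H_q(z) = 𝔇(𝓛_q(z)) − 𝔇(L̂_q(z))`, under the stability and
boundedness hypotheses, `(H_q(z) − H_q(z^i))² ≼ (4B/m_q + √Q·M/m_q)² · I`. -/
theorem statement7 {𝒳 ℋ : Type*} [MeasurableSpace 𝒳] {Q m : ℕ}
    (ℓ : Fin Q → ℋ → 𝒳 → Fin Q → ℝ)
    (A : List (𝒳 × Fin Q) → ℋ)
    (D : Fin Q → Measure 𝒳) [∀ q, IsProbabilityMeasure (D q)]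
    (y : Fin m → Fin Q) (x : Fin m → 𝒳) (x' : 𝒳)
    (q : Fin Q) (i : Fin m) (hyi : y i = q)
    (B : ℝ) (hB : 0 < B) (M : ℝ) (hM : 0 ≤ M)
    (hloss : ∀ (j : Fin Q) (h : ℋ) (x0 : 𝒳) (y0 : Fin Q), ℓ j h x0 y0 ∈ Set.Icc (0 : ℝ) M)
    (mq : ℕ) (hmq : mq = (Finset.univ.filter fun j => y j = q).card) (hmq1 : 1 ≤ mq)
    (z zi zbs : List (𝒳 × Fin Q))
    (hz : z = List.ofFn fun j => (x j, y j))
    (hzi : zi = z.set i (x', q))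
    (hzbs : zbs = z.eraseIdx i)
    (hstab : ∀ x0 : 𝒳,
      opNorm (lossMatrix ℓ (A z) x0 q - lossMatrix ℓ (A zbs) x0 q) ≤ B / mq)
    (hstab' : ∀ x0 : 𝒳,
      opNorm (lossMatrix ℓ (A zi) x0 q - lossMatrix ℓ (A zbs) x0 q) ≤ B / mq)
    (hint : ∀ a b, Integrable (fun t => lossMatrix ℓ (A z) t q a b) (D q))
    (hint' : ∀ a b, Integrable (fun t => lossMatrix ℓ (A zi) t q a b) (D q))
    -- `H_q` evaluated at the sample `z` and at the perturbed sample `z^i`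
    (Hz Hzi : Matrix (Fin Q ⊕ Fin Q) (Fin Q ⊕ Fin Q) ℝ)
    (hHz : Hz = dilation (Matrix.of fun a b => ∫ t, lossMatrix ℓ (A z) t q a b ∂(D q)) -
        dilation ((mq : ℝ)⁻¹ • ∑ k ∈ Finset.univ.filter (fun k => y k = q),
          lossMatrix ℓ (A z) (x k) q))
    (hHzi : Hzi = dilation (Matrix.of fun a b => ∫ t, lossMatrix ℓ (A zi) t q a b ∂(D q)) -
        dilation ((mq : ℝ)⁻¹ • ((∑ k ∈ (Finset.univ.filter fun k => y k = q).erase i,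
          lossMatrix ℓ (A zi) (x k) q) + lossMatrix ℓ (A zi) x' q))) :
    loewnerLE ((Hz - Hzi) ^ 2)
      ((4 * B / mq + Real.sqrt Q * M / mq) ^ 2 • (1 : Matrix (Fin Q ⊕ Fin Q) (Fin Q ⊕ Fin Q) ℝ)) :=
  statement7_general ℓ A D y x x' q i hyi B hB M hM hloss mq hmq z zi zbs hstab hstab' hint hint' Hz
    Hzi hHz hHzi
end

section
/- (Lemma 5.) Consider the Lee–Lin–Wahba multiclass SVM: ℋ is an RKHS of real functions on 𝒳 with k(x,x) ≤ κ², and h* ∈ ℋ^Q minimizes J(h) = (1/m) Σ_{k=1}^m Σ_{q ≠ y_k} (h_q(x_k) + 1/(Q−1))₊ + λ Σ_{q=1}^Q ‖h_q‖², where (u)₊ = max(u, 0). Then for the class-wise losses ℓ_q(h, x, y) = Σ_{p ≠ q} (h_p(x) + 1/(Q−1))₊, one has for all x ∈ 𝒳, y ∈ 𝒴, and q ∈ {1,…,Q}: ℓ_q(h*, x, y) ≤ Qκ/√λ + 1. -/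
/-!
Comparing the minimizer with `h = 0`: the data term is nonnegative and equals `1` at `0`,
so `λ Σ_q ‖h*_q‖² ≤ J(h*) ≤ J(0) = 1`, whence `‖h*_q‖ ≤ 1/√λ` and, by Cauchy–Schwarz,
`h*_q(x) ≤ κ/√λ`. Each of the `Q - 1` hinge terms of `ℓ_q` is then at most
`κ/√λ + 1/(Q-1)`.
-/

open scoped RealInnerProductSpace

open Finset

theorem regularizer_le_of_isMinOn {ι E : Type*} [Fintype ι] [NormedAddCommGroup E]
    (L : (ι → E) → ℝ) (hL : ∀ h, 0 ≤ L h) (lam : ℝ) (hstar : ι → E)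
    (hmin : IsMinOn (fun h => L h + lam * ∑ i, ‖h i‖ ^ 2) Set.univ hstar) :
    lam * ∑ i, ‖hstar i‖ ^ 2 ≤ L 0 := by
  have h0 : L hstar + lam * ∑ i, ‖hstar i‖ ^ 2 ≤ L 0 + lam * ∑ i, ‖(0 : ι → E) i‖ ^ 2 :=
    hmin (Set.mem_univ 0)
  simp only [Pi.zero_apply, norm_zero, ne_eq, OfNat.ofNat_ne_zero, not_false_eq_true, zero_pow,
    sum_const_zero, mul_zero, add_zero] at h0
  linarith [hL hstar]

theorem norm_le_one_div_sqrt_of_mul_sum_sq_le {ι E : Type*} [Fintype ι] [NormedAddCommGroup E]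
    {lam : ℝ} (hlam : 0 < lam) {f : ι → E} (hf : lam * ∑ i, ‖f i‖ ^ 2 ≤ 1) (i : ι) :
    ‖f i‖ ≤ 1 / √lam := by
  have hsq : ‖f i‖ ^ 2 ≤ 1 / lam := by
    rw [le_div_iff₀ hlam]
    have := single_le_sum (f := fun j => ‖f j‖ ^ 2) (fun j _ => by positivity) (mem_univ i)
    nlinarith
  rw [one_div, ← Real.sqrt_inv, ← one_div]
  exact Real.le_sqrt_of_sq_le hsq

section LLW

variable {𝒳 E : Type*} [NormedAddCommGroup E] [InnerProductSpace ℝ E] {Q : ℕ}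

-- The paper's `ℓ_q(h, x, y)`, which does not depend on `y`.
noncomputable def llwClassLoss (K : 𝒳 → E) (h : Fin Q → E) (x : 𝒳) (q : Fin Q) : ℝ :=
  ∑ p ∈ univ.erase q, max (⟪K x, h p⟫ + ((Q : ℝ) - 1)⁻¹) 0

theorem llwClassLoss_nonneg (K : 𝒳 → E) (h : Fin Q → E) (x : 𝒳) (q : Fin Q) :
    0 ≤ llwClassLoss K h x q :=
  sum_nonneg fun _ _ => le_max_right _ _

theorem card_univ_erase_fin_cast (q : Fin Q) : ((univ.erase q).card : ℝ) = (Q : ℝ) - 1 := by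
  rw [card_erase_of_mem (mem_univ q), card_univ, Fintype.card_fin,
    Nat.cast_sub (Nat.one_le_iff_ne_zero.mpr q.pos.ne'), Nat.cast_one]

theorem llwClassLoss_zero (hQ : 1 < Q) (K : 𝒳 → E) (x : 𝒳) (q : Fin Q) :
    llwClassLoss K 0 x q = 1 := by
  have hQ1 : (0 : ℝ) < (Q : ℝ) - 1 := sub_pos.mpr (Nat.one_lt_cast.mpr hQ)
  simp only [llwClassLoss, Pi.zero_apply, inner_zero_right, zero_add,
    max_eq_left (inv_nonneg.mpr hQ1.le), sum_const, nsmul_eq_mul, card_univ_erase_fin_cast]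
  exact mul_inv_cancel₀ hQ1.ne'

theorem llwClassLoss_le (hQ : 1 < Q) {K : 𝒳 → E} {κ B : ℝ} {x : 𝒳} (hK : ‖K x‖ ≤ κ)
    {h : Fin Q → E} (hB : ∀ p, ‖h p‖ ≤ B) (q : Fin Q) :
    llwClassLoss K h x q ≤ ((Q : ℝ) - 1) * (κ * B) + 1 := by
  have hQ1 : (0 : ℝ) < (Q : ℝ) - 1 := sub_pos.mpr (Nat.one_lt_cast.mpr hQ)
  have hterm : ∀ p, max (⟪K x, h p⟫ + ((Q : ℝ) - 1)⁻¹) 0 ≤ κ * B + ((Q : ℝ) - 1)⁻¹ := by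
    intro p
    have hKh : ‖K x‖ * ‖h p‖ ≤ κ * B :=
      mul_le_mul hK (hB p) (norm_nonneg _) ((norm_nonneg _).trans hK)
    have hinner := real_inner_le_norm (K x) (h p)
    have hKh_nonneg : 0 ≤ ‖K x‖ * ‖h p‖ := by positivity
    have hc : 0 ≤ ((Q : ℝ) - 1)⁻¹ := inv_nonneg.mpr hQ1.le
    exact max_le (by linarith) (by linarith)
  calc llwClassLoss K h x q ≤ ∑ _p ∈ univ.erase q, (κ * B + ((Q : ℝ) - 1)⁻¹) :=
        sum_le_sum fun p _ => hterm p
    _ = ((Q : ℝ) - 1) * (κ * B) + 1 := by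
        rw [sum_const, nsmul_eq_mul, card_univ_erase_fin_cast, mul_add, mul_inv_cancel₀ hQ1.ne']

end LLW

theorem statement16_general {𝒳 ℋ₀ : Type*} [NormedAddCommGroup ℋ₀] [InnerProductSpace ℝ ℋ₀]
    {Q m : ℕ} (hQ : 2 ≤ Q) (hm : 0 < m)
    (K : 𝒳 → ℋ₀) (κ : ℝ) (hK : ∀ x, ‖K x‖ ≤ κ)
    (lam : ℝ) (hlam : 0 < lam)
    (x : Fin m → 𝒳) (yv : Fin m → Fin Q)
    (hstar : Fin Q → ℋ₀)
    (hmin : IsMinOn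
      (fun h : Fin Q → ℋ₀ =>
        (m : ℝ)⁻¹ * ∑ k : Fin m, ∑ q ∈ Finset.univ.erase (yv k),
          max (⟪K (x k), h q⟫ + ((Q : ℝ) - 1)⁻¹) 0 +
        lam * ∑ q, ‖h q‖ ^ 2)
      Set.univ hstar) :
    ∀ (x0 : 𝒳) (y0 q : Fin Q),
      (∑ p ∈ Finset.univ.erase q, max (⟪K x0, hstar p⟫ + ((Q : ℝ) - 1)⁻¹) 0)
        ≤ Q * κ / Real.sqrt lam + 1 := by
  intro x0 _ q
  have hreg : lam * ∑ p, ‖hstar p‖ ^ 2 ≤ 1 := by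
    have := regularizer_le_of_isMinOn
      (fun h => (m : ℝ)⁻¹ * ∑ k, llwClassLoss K h (x k) (yv k))
      (fun h => mul_nonneg (by positivity) (sum_nonneg fun _ _ => llwClassLoss_nonneg ..))
      lam hstar hmin
    simpa [llwClassLoss_zero hQ, hm.ne'] using this
  have hbound := llwClassLoss_le hQ (hK x0)
    (norm_le_one_div_sqrt_of_mul_sum_sq_le hlam hreg) q
  have hκ : 0 ≤ κ / √lam := div_nonneg ((norm_nonneg _).trans (hK x0)) (Real.sqrt_nonneg _)
  calc llwClassLoss K hstar x0 q ≤ ((Q : ℝ) - 1) * (κ * (1 / √lam)) + 1 := hbound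
    _ ≤ Q * κ / √lam + 1 := by
        rw [mul_one_div, mul_div_assoc]
        nlinarith

/-- **Lemma 5 (Lee–Lin–Wahba).** If `h*` minimizes the LLW objective
`J(h) = (1/m) Σ_k Σ_{q ≠ y_k} (h_q(x_k) + 1/(Q−1))₊ + λ Σ_q ‖h_q‖²` over an RKHS with
`k(x,x) ≤ κ²` (reproducing elements `K x` with `‖K x‖ ≤ κ`, evaluation
`h_q(x) = ⟪K x, h q⟫`), then the class-wise losses
`ℓ_q(h*, x, y) = Σ_{p ≠ q} (h*_p(x) + 1/(Q−1))₊` satisfy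
`ℓ_q(h*, x, y) ≤ Qκ/√λ + 1` for all `x`, `y`, `q`. -/
theorem statement16 {𝒳 ℋ₀ : Type*} [NormedAddCommGroup ℋ₀] [InnerProductSpace ℝ ℋ₀]
    {Q m : ℕ} (hQ : 2 ≤ Q) (hm : 0 < m)
    (K : 𝒳 → ℋ₀) (κ : ℝ) (hκ : 0 ≤ κ) (hK : ∀ x, ‖K x‖ ≤ κ)
    (lam : ℝ) (hlam : 0 < lam)
    (x : Fin m → 𝒳) (yv : Fin m → Fin Q)
    (hstar : Fin Q → ℋ₀)
    (hmin : IsMinOn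
      (fun h : Fin Q → ℋ₀ =>
        (m : ℝ)⁻¹ * ∑ k : Fin m, ∑ q ∈ Finset.univ.erase (yv k),
          max (⟪K (x k), h q⟫ + ((Q : ℝ) - 1)⁻¹) 0 +
        lam * ∑ q, ‖h q‖ ^ 2)
      Set.univ hstar) :
    ∀ (x0 : 𝒳) (y0 q : Fin Q),
      (∑ p ∈ Finset.univ.erase q, max (⟪K x0, hstar p⟫ + ((Q : ℝ) - 1)⁻¹) 0)
        ≤ Q * κ / Real.sqrt lam + 1 :=
  statement16_general hQ hm K κ hK lam hlam x yv hstar hmin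
end

section
/- (Lemma 6.) Consider the Weston–Watkins multiclass SVM: ℋ is an RKHS of real functions on 𝒳 with k(x,x) ≤ κ², and h* ∈ ℋ^Q minimizes J(h) = (1/m) Σ_{k=1}^m Σ_{q ≠ y_k} (1 − h_{y_k}(x_k) + h_q(x_k))₊ + λ Σ_{q<p} ‖h_q − h_p‖². For the class-wise losses ℓ_q(h, x, y) = Σ_{p≠q} (1 − h_{pq}(x))₊, where h_{pq} = h_p − h_q, one has for all x ∈ 𝒳, y ∈ 𝒴, and q ∈ {1,…,Q}: ℓ_q(h*, x, y) ≤ Q (1 + κ √(Q/λ)). -/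
open scoped RealInnerProductSpace

/-- **Lemma 6 (Weston–Watkins).** If `h*` minimizes the WW objective
`J(h) = (1/m) Σ_k Σ_{q ≠ y_k} (1 − h_{y_k}(x_k) + h_q(x_k))₊ + λ Σ_{q<p} ‖h_q − h_p‖²`
over an RKHS with `k(x,x) ≤ κ²` (reproducing elements `K x` with `‖K x‖ ≤ κ`,
evaluation `h_q(x) = ⟪K x, h q⟫`), then the class-wise losses
`ℓ_q(h*, x, y) = Σ_{p ≠ q} (1 − (h*_p − h*_q)(x))₊` satisfy
`ℓ_q(h*, x, y) ≤ Q(1 + κ√(Q/λ))` for all `x`, `y`, `q`. -/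
theorem statement18 {𝒳 ℋ₀ : Type*} [NormedAddCommGroup ℋ₀] [InnerProductSpace ℝ ℋ₀]
    {Q m : ℕ} (hQ : 2 ≤ Q) (hm : 0 < m)
    (K : 𝒳 → ℋ₀) (κ : ℝ) (hκ : 0 ≤ κ) (hK : ∀ x, ‖K x‖ ≤ κ)
    (lam : ℝ) (hlam : 0 < lam)
    (x : Fin m → 𝒳) (yv : Fin m → Fin Q)
    (hstar : Fin Q → ℋ₀)
    (hmin : IsMinOn
      (fun h : Fin Q → ℋ₀ =>
        (m : ℝ)⁻¹ * ∑ k : Fin m, ∑ q ∈ Finset.univ.erase (yv k),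
          max (1 - ⟪K (x k), h (yv k)⟫ + ⟪K (x k), h q⟫) 0 +
        lam * ∑ p : Fin Q, ∑ q ∈ Finset.univ.filter fun q => q < p, ‖h q - h p‖ ^ 2)
      Set.univ hstar) :
    ∀ (x0 : 𝒳) (y0 q : Fin Q),
      (∑ p ∈ Finset.univ.erase q, max (1 - (⟪K x0, hstar p⟫ - ⟪K x0, hstar q⟫)) 0)
        ≤ Q * (1 + κ * Real.sqrt (Q / lam)) := by
  intro x0 y0 q
  have h0 := hmin (Set.mem_univ (0 : Fin Q → ℋ₀))
  simp only [Set.mem_setOf_eq, inner_zero_right, sub_zero, add_zero, norm_zero,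
    zero_pow, sub_self, Pi.zero_apply] at h0
  -- J(0) computation
  have hJ0 : (m : ℝ)⁻¹ * ∑ k : Fin m, ∑ q ∈ Finset.univ.erase (yv k),
      max (1 : ℝ) 0 + lam * ∑ p : Fin Q,
        ∑ q ∈ Finset.univ.filter fun q => q < p, (0:ℝ) = (Q - 1 : ℝ) := by
    simp [Finset.sum_const, Finset.card_erase_of_mem, max_eq_left, mul_comm]
    rw [inv_mul_cancel_left₀ (by positivity : (m:ℝ) ≠ 0)]
    push_cast [Nat.cast_sub (by omega : 1 ≤ Q)]
    ring
  have h0' : (m : ℝ)⁻¹ * ∑ k : Fin m, ∑ q' ∈ Finset.univ.erase (yv k),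
        max (1 - ⟪K (x k), hstar (yv k)⟫ + ⟪K (x k), hstar q'⟫) 0 +
      lam * ∑ p : Fin Q, ∑ q' ∈ Finset.univ.filter fun q' => q' < p,
        ‖hstar q' - hstar p‖ ^ 2 ≤ (Q - 1 : ℝ) := by
    calc _ ≤ _ := h0
    _ = (Q - 1 : ℝ) := by rw [← hJ0]; norm_num
  -- loss term nonneg
  have hlossnn : 0 ≤ (m : ℝ)⁻¹ * ∑ k : Fin m, ∑ q' ∈ Finset.univ.erase (yv k),
      max (1 - ⟪K (x k), hstar (yv k)⟫ + ⟪K (x k), hstar q'⟫) 0 := by positivity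
  set R := ∑ p : Fin Q, ∑ q' ∈ Finset.univ.filter fun q' => q' < p,
      ‖hstar q' - hstar p‖ ^ 2 with hR
  have hRle : lam * R ≤ (Q - 1 : ℝ) := by linarith
  -- pair bound for a < b
  have hpair : ∀ a b : Fin Q, a < b → ‖hstar a - hstar b‖ ^ 2 ≤ R := by
    intro a b hab
    have h1 : ‖hstar a - hstar b‖ ^ 2 ≤
        ∑ q' ∈ Finset.univ.filter fun q' => q' < b, ‖hstar q' - hstar b‖ ^ 2 :=
      Finset.single_le_sum (f := fun q' => ‖hstar q' - hstar b‖ ^ 2)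
        (fun i _ => by positivity)
        (Finset.mem_filter.mpr ⟨Finset.mem_univ a, hab⟩)
    refine h1.trans ?_
    exact Finset.single_le_sum (f := fun p => ∑ q' ∈ Finset.univ.filter fun q' => q' < p,
      ‖hstar q' - hstar p‖ ^ 2)
      (fun i _ => Finset.sum_nonneg fun j _ => by positivity) (Finset.mem_univ b)
  have hpair' : ∀ a b : Fin Q, a ≠ b → ‖hstar a - hstar b‖ ^ 2 ≤ R := by
    intro a b hab
    rcases lt_or_gt_of_ne hab with h | h
    · exact hpair a b h
    · rw [norm_sub_rev]; exact hpair b a h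
  have hRQ : R ≤ Q / lam := by
    rw [le_div_iff₀ hlam, mul_comm]
    have : (Q - 1 : ℝ) ≤ Q := by linarith
    linarith
  -- norm bound
  have hnorm : ∀ a b : Fin Q, a ≠ b → ‖hstar a - hstar b‖ ≤ Real.sqrt (Q / lam) := by
    intro a b hab
    rw [show Real.sqrt (Q/lam) = Real.sqrt (Q/lam) from rfl]
    have := (hpair' a b hab).trans hRQ
    have h2 : ‖hstar a - hstar b‖ ≤ Real.sqrt (‖hstar a - hstar b‖ ^ 2) := by
      rw [Real.sqrt_sq (norm_nonneg _)]
    exact h2.trans (Real.sqrt_le_sqrt this)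
  -- term bound
  have hterm : ∀ p ∈ Finset.univ.erase q,
      max (1 - (⟪K x0, hstar p⟫ - ⟪K x0, hstar q⟫)) 0 ≤ 1 + κ * Real.sqrt (Q / lam) := by
    intro p hp
    have hpq : p ≠ q := Finset.ne_of_mem_erase hp
    have hd : |⟪K x0, hstar p⟫ - ⟪K x0, hstar q⟫| ≤ κ * Real.sqrt (Q / lam) := by
      rw [← inner_sub_right]
      refine (abs_real_inner_le_norm _ _).trans ?_
      exact mul_le_mul (hK x0) (hnorm p q hpq) (norm_nonneg _) hκ
    have hs : 0 ≤ Real.sqrt (Q / lam) := Real.sqrt_nonneg _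
    have habs := abs_le.mp hd
    apply max_le
    · linarith
    · positivity
  calc (∑ p ∈ Finset.univ.erase q, max (1 - (⟪K x0, hstar p⟫ - ⟪K x0, hstar q⟫)) 0)
      ≤ ∑ p ∈ Finset.univ.erase q, (1 + κ * Real.sqrt (Q / lam)) :=
        Finset.sum_le_sum hterm
    _ = (Q - 1 : ℕ) * (1 + κ * Real.sqrt (Q / lam)) := by
        rw [Finset.sum_const, Finset.card_erase_of_mem (Finset.mem_univ q)]
        simp [nsmul_eq_mul, Finset.card_univ]
        ring
    _ ≤ Q * (1 + κ * Real.sqrt (Q / lam)) := by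
        have hs : 0 ≤ Real.sqrt (Q / lam) := Real.sqrt_nonneg _
        have h1 : ((Q - 1 : ℕ) : ℝ) ≤ Q := by
          have := Nat.sub_le Q 1; exact_mod_cast this
        have h2 : (0:ℝ) ≤ 1 + κ * Real.sqrt (Q / lam) := by positivity
        exact mul_le_mul_of_nonneg_right h1 h2
end
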